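/- Let b, c, m : ℝ → ℝ be smooth, let u : ℝ² → ℝ be a smooth solution of the wave equation F[u] = 0, and let v : ℝ² → ℝ be a smooth solution of the adjoint equation ∂ₜ²v − ∂ₓ²v − b(u)·∂ₜv − c(u)·∂ₓv + m′(u)·v = 0 on ℝ² (so that (u,v) solves the extended Euler–Lagrange system of the Lagrangian L = v·F[u]). Then the Noether current of the time-translation symmetry, Ĉᵗ = −v·∂ₜ²u − (b(u)·v − ∂ₜv)·∂ₜu and Ĉˣ = v·∂ₜ∂ₓu − (c(u)·v + ∂ₓv)·∂ₜu, is divergence-free: ∂ₜĈᵗ + ∂ₓĈˣ = 0 on ℝ². -/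

import Mathlib

/-!
Differentiating the current and commuting mixed partials (Schwarz) gives the Noether identity
`∂ₜĈᵗ + ∂ₓĈˣ = -v · ∂ₜ(F[u]) + ∂ₜu · L*[u]v`, valid for all smooth `u`, `v`. For a solution `u`
the function `F[u]` vanishes identically, hence so does its time derivative, and the adjoint
equation kills the second term.
-/

noncomputable section

open Real

/-- Partial derivative in the first (time) variable. -/
def Dt (u : ℝ → ℝ → ℝ) : ℝ → ℝ → ℝ := fun t x => deriv (fun s => u s x) t

/-- Partial derivative in the second (space) variable. -/
def Dx (u : ℝ → ℝ → ℝ) : ℝ → ℝ → ℝ := fun t x => deriv (fun s => u t s) x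

/-- Smoothness (C^∞) of a function of two real variables. -/
def Smooth2 (u : ℝ → ℝ → ℝ) : Prop := ContDiff ℝ (⊤ : ℕ∞) (fun p : ℝ × ℝ => u p.1 p.2)
/-- The semilinear wave operator F[u] = ∂ₜ²u − ∂ₓ²u + b(u)∂ₜu + c(u)∂ₓu + m(u). -/
def Fop (b c m : ℝ → ℝ) (u : ℝ → ℝ → ℝ) : ℝ → ℝ → ℝ := fun t x =>
  Dt (Dt u) t x - Dx (Dx u) t x + b (u t x) * Dt u t x + c (u t x) * Dx u t x + m (u t x)

/-- The adjoint linearized operator along u: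
L*[u]q = ∂ₜ²q − ∂ₓ²q − b(u)∂ₜq − c(u)∂ₓq + m′(u)q. -/
def Lstar (b c m : ℝ → ℝ) (u q : ℝ → ℝ → ℝ) : ℝ → ℝ → ℝ := fun t x =>
  Dt (Dt q) t x - Dx (Dx q) t x - b (u t x) * Dt q t x - c (u t x) * Dx q t x
    + deriv m (u t x) * q t x

namespace Smooth2

variable {u : ℝ → ℝ → ℝ}

theorem hasDerivAt_fderiv_t (hu : Smooth2 u) (t x : ℝ) :
    HasDerivAt (fun s => u s x) (fderiv ℝ (fun p : ℝ × ℝ => u p.1 p.2) (t, x) (1, 0)) t := by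
  have hline : HasDerivAt (fun s : ℝ => (s, x)) ((1 : ℝ), (0 : ℝ)) t :=
    (hasDerivAt_id t).prodMk (hasDerivAt_const t x)
  exact ((hu.differentiable (by simp)) (t, x)).hasFDerivAt.comp_hasDerivAt t hline

theorem hasDerivAt_fderiv_x (hu : Smooth2 u) (t x : ℝ) :
    HasDerivAt (fun s => u t s) (fderiv ℝ (fun p : ℝ × ℝ => u p.1 p.2) (t, x) (0, 1)) x := by
  have hline : HasDerivAt (fun s : ℝ => (t, s)) ((0 : ℝ), (1 : ℝ)) x :=
    (hasDerivAt_const x t).prodMk (hasDerivAt_id x)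
  exact ((hu.differentiable (by simp)) (t, x)).hasFDerivAt.comp_hasDerivAt x hline

theorem dt_eq_fderiv (hu : Smooth2 u) (t x : ℝ) :
    Dt u t x = fderiv ℝ (fun p : ℝ × ℝ => u p.1 p.2) (t, x) (1, 0) :=
  (hu.hasDerivAt_fderiv_t t x).deriv

theorem dx_eq_fderiv (hu : Smooth2 u) (t x : ℝ) :
    Dx u t x = fderiv ℝ (fun p : ℝ × ℝ => u p.1 p.2) (t, x) (0, 1) :=
  (hu.hasDerivAt_fderiv_x t x).deriv

theorem hasDerivAt_dt (hu : Smooth2 u) (t x : ℝ) : HasDerivAt (fun s => u s x) (Dt u t x) t :=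
  (hu.hasDerivAt_fderiv_t t x).differentiableAt.hasDerivAt

theorem hasDerivAt_dx (hu : Smooth2 u) (t x : ℝ) : HasDerivAt (fun s => u t s) (Dx u t x) x :=
  (hu.hasDerivAt_fderiv_x t x).differentiableAt.hasDerivAt

theorem contDiff_fderiv_apply (hu : Smooth2 u) (w : ℝ × ℝ) :
    ContDiff ℝ (⊤ : ℕ∞) (fun p : ℝ × ℝ => fderiv ℝ (fun q : ℝ × ℝ => u q.1 q.2) p w) :=
  (hu.fderiv_right (by norm_cast)).clm_apply contDiff_const

theorem dt (hu : Smooth2 u) : Smooth2 (Dt u) := by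
  unfold Smooth2
  simpa only [hu.dt_eq_fderiv] using hu.contDiff_fderiv_apply (1, 0)

theorem dx (hu : Smooth2 u) : Smooth2 (Dx u) := by
  unfold Smooth2
  simpa only [hu.dx_eq_fderiv] using hu.contDiff_fderiv_apply (0, 1)

theorem fderiv_fderiv_apply (hu : Smooth2 u) (p w w' : ℝ × ℝ) :
    fderiv ℝ (fun q : ℝ × ℝ => fderiv ℝ (fun r : ℝ × ℝ => u r.1 r.2) q w') p w
      = fderiv ℝ (fderiv ℝ (fun r : ℝ × ℝ => u r.1 r.2)) p w w' := by
  have hdiff := (hu.fderiv_right (m := 1) (by norm_cast)).differentiable one_ne_zero p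
  rw [fderiv_clm_apply hdiff (differentiableAt_const w')]
  simp

theorem dt_dx_comm (hu : Smooth2 u) (t x : ℝ) : Dt (Dx u) t x = Dx (Dt u) t x := by
  rw [hu.dx.dt_eq_fderiv, hu.dt.dx_eq_fderiv]
  simp only [hu.dt_eq_fderiv, hu.dx_eq_fderiv, hu.fderiv_fderiv_apply]
  exact (hu.contDiffAt.isSymmSndFDerivAt (by simp only [minSmoothness_of_isRCLikeNormedField]; exact ENat.LEInfty.out)) _ _

end Smooth2

def noetherCurrentT (b : ℝ → ℝ) (u v : ℝ → ℝ → ℝ) : ℝ → ℝ → ℝ := fun t x =>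
  -(v t x) * Dt (Dt u) t x - (b (u t x) * v t x - Dt v t x) * Dt u t x

def noetherCurrentX (c : ℝ → ℝ) (u v : ℝ → ℝ → ℝ) : ℝ → ℝ → ℝ := fun t x =>
  v t x * Dt (Dx u) t x - (c (u t x) * v t x + Dx v t x) * Dt u t x

section NoetherIdentity

variable {b c m : ℝ → ℝ} {u v : ℝ → ℝ → ℝ} {t x : ℝ}

theorem dt_fop (hb : DifferentiableAt ℝ b (u t x)) (hc : DifferentiableAt ℝ c (u t x))
    (hm : DifferentiableAt ℝ m (u t x)) (hu : Smooth2 u) :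
    Dt (Fop b c m u) t x = Dt (Dt (Dt u)) t x - Dt (Dx (Dx u)) t x
      + (deriv b (u t x) * Dt u t x * Dt u t x + b (u t x) * Dt (Dt u) t x)
      + (deriv c (u t x) * Dt u t x * Dx u t x + c (u t x) * Dt (Dx u) t x)
      + deriv m (u t x) * Dt u t x := by
  have hu_t := hu.hasDerivAt_dt t x
  have := (((((hu.dt.dt.hasDerivAt_dt t x).sub (hu.dx.dx.hasDerivAt_dt t x)).add
    ((hb.hasDerivAt.comp t hu_t).mul (hu.dt.hasDerivAt_dt t x))).add
    ((hc.hasDerivAt.comp t hu_t).mul (hu.dx.hasDerivAt_dt t x))).add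
    (hm.hasDerivAt.comp t hu_t)).deriv
  simpa [Dt, Fop, Function.comp_def, Pi.mul_def, Pi.sub_def, Pi.add_def, Pi.neg_def] using this

theorem dt_noetherCurrentT (hb : DifferentiableAt ℝ b (u t x)) (hu : Smooth2 u)
    (hv : Smooth2 v) :
    Dt (noetherCurrentT b u v) t x
      = (-(Dt v t x) * Dt (Dt u) t x + -(v t x) * Dt (Dt (Dt u)) t x)
        - ((deriv b (u t x) * Dt u t x * v t x + b (u t x) * Dt v t x
            - Dt (Dt v) t x) * Dt u t x
          + (b (u t x) * v t x - Dt v t x) * Dt (Dt u) t x) := by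
  have hv_t := hv.hasDerivAt_dt t x
  have := ((hv_t.neg.mul (hu.dt.dt.hasDerivAt_dt t x)).sub
    ((((hb.hasDerivAt.comp t (hu.hasDerivAt_dt t x)).mul hv_t).sub
      (hv.dt.hasDerivAt_dt t x)).mul (hu.dt.hasDerivAt_dt t x))).deriv
  simpa [Dt, noetherCurrentT, Function.comp_def, Pi.mul_def, Pi.sub_def, Pi.add_def, Pi.neg_def] using this

theorem dx_noetherCurrentX (hc : DifferentiableAt ℝ c (u t x)) (hu : Smooth2 u)
    (hv : Smooth2 v) :
    Dx (noetherCurrentX c u v) t x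
      = (Dx v t x * Dt (Dx u) t x + v t x * Dx (Dt (Dx u)) t x)
        - ((deriv c (u t x) * Dx u t x * v t x + c (u t x) * Dx v t x
            + Dx (Dx v) t x) * Dt u t x
          + (c (u t x) * v t x + Dx v t x) * Dx (Dt u) t x) := by
  have hv_x := hv.hasDerivAt_dx t x
  have := ((hv_x.mul (hu.dx.dt.hasDerivAt_dx t x)).sub
    ((((hc.hasDerivAt.comp x (hu.hasDerivAt_dx t x)).mul hv_x).add
      (hv.dx.hasDerivAt_dx t x)).mul (hu.dt.hasDerivAt_dx t x))).deriv
  simpa [Dx, noetherCurrentX, Function.comp_def, Pi.mul_def, Pi.sub_def, Pi.add_def, Pi.neg_def] using this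

theorem div_noetherCurrent (hb : DifferentiableAt ℝ b (u t x))
    (hc : DifferentiableAt ℝ c (u t x)) (hm : DifferentiableAt ℝ m (u t x))
    (hu : Smooth2 u) (hv : Smooth2 v) :
    Dt (noetherCurrentT b u v) t x + Dx (noetherCurrentX c u v) t x
      = -(v t x) * Dt (Fop b c m u) t x + Dt u t x * Lstar b c m u v t x := by
  rw [dt_noetherCurrentT hb hu hv, dx_noetherCurrentX hc hu hv, dt_fop hb hc hm hu,
    ← hu.dx.dt_dx_comm, ← hu.dt_dx_comm, Lstar]
  ring

end NoetherIdentity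

/-- If u solves the wave equation and v solves the adjoint equation along u,
then the Noether current of the time-translation symmetry is divergence-free. -/
theorem stmt_19
    (b c m : ℝ → ℝ)
    (hb : ContDiff ℝ (⊤ : ℕ∞) b) (hc : ContDiff ℝ (⊤ : ℕ∞) c) (hm : ContDiff ℝ (⊤ : ℕ∞) m)
    (u : ℝ → ℝ → ℝ) (hu : Smooth2 u) (hsol : ∀ t x, Fop b c m u t x = 0)
    (v : ℝ → ℝ → ℝ) (hv : Smooth2 v)
    (hadj : ∀ t x, Lstar b c m u v t x = 0) :
    ∀ t x : ℝ,
      Dt (fun t x =>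
        -(v t x) * Dt (Dt u) t x - (b (u t x) * v t x - Dt v t x) * Dt u t x) t x
      + Dx (fun t x =>
        v t x * Dt (Dx u) t x - (c (u t x) * v t x + Dx v t x) * Dt u t x) t x = 0 := by
  intro t x
  have hF : Dt (Fop b c m u) t x = 0 := by simp only [Dt, hsol, deriv_const]
  have hdiv := div_noetherCurrent (hb.differentiable (by simp) _) (hc.differentiable (by simp) _)
    (hm.differentiable (by simp) _) hu hv (t := t) (x := x)
  rw [hF, hadj, mul_zero, mul_zero, add_zero] at hdiv
  exact hdiv
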